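/- For any θ ∈ L²([a,b],ℝ), the equation g_θ(σ) = 1, where g_θ(σ) = ∫ₐᵇ max(θ(x) − σ, 0) dx, admits exactly one solution σ ∈ ℝ. -/

import Mathlib

/-!
`σ ↦ ∫ (θ - σ)⁺` is continuous (indeed Lipschitz) and antitone, tends to `+∞` as `σ → -∞` since it
dominates `∫ θ - (b - a) σ`, and tends to `0` as `σ → +∞` by dominated convergence; the intermediate
value theorem gives a solution. It is strictly decreasing wherever it is positive: if it took the same
value at `s < t`, the nonnegative integrand `(θ - s)⁺ - (θ - t)⁺` would vanish a.e., forcing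
`(θ - t)⁺ = 0` a.e.
-/

open MeasureTheory Filter Topology

noncomputable section

lemma max_sub_eq_zero_of_max_sub_eq {y s t : ℝ} (hst : s < t)
    (h : max (y - s) 0 = max (y - t) 0) : max (y - t) 0 = 0 := by
  rcases le_or_gt y t with hy | hy
  · exact max_eq_right (by linarith)
  · rw [max_eq_left (by linarith), max_eq_left (by linarith)] at h
    linarith

namespace MeasureTheory

variable {α : Type*} [MeasurableSpace α] {μ : Measure α} {f : α → ℝ}

def integralExcess (μ : Measure α) (f : α → ℝ) (σ : ℝ) : ℝ :=
  ∫ x, max (f x - σ) 0 ∂μ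

section Integrable

variable [IsFiniteMeasure μ] (hf : Integrable f μ)
include hf

lemma Integrable.max_sub_const (σ : ℝ) : Integrable (fun x => max (f x - σ) 0) μ :=
  (hf.sub (integrable_const σ)).pos_part

lemma antitone_integralExcess : Antitone (integralExcess μ f) := fun _ _ h =>
  integral_mono (hf.max_sub_const _) (hf.max_sub_const _) fun _ =>
    max_le_max (by linarith) le_rfl

lemma lipschitzWith_integralExcess :
    LipschitzWith (μ.real Set.univ).toNNReal (integralExcess μ f) := by
  refine LipschitzWith.of_dist_le_mul fun s t => ?_
  rw [Real.coe_toNNReal _ measureReal_nonneg, Real.dist_eq, Real.dist_eq, integralExcess,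
    integralExcess, ← integral_sub (hf.max_sub_const s) (hf.max_sub_const t)]
  calc |∫ x, (max (f x - s) 0 - max (f x - t) 0) ∂μ|
      ≤ ∫ x, |max (f x - s) 0 - max (f x - t) 0| ∂μ := abs_integral_le_integral_abs
    _ ≤ ∫ _, |s - t| ∂μ := by
        refine integral_mono ((hf.max_sub_const s).sub (hf.max_sub_const t)).abs
          (integrable_const _) fun x => ?_
        simpa [abs_sub_comm] using abs_max_sub_max_le_abs (f x - s) (f x - t) 0
    _ = μ.real Set.univ * |s - t| := by rw [integral_const, smul_eq_mul]

lemma integral_sub_le_integralExcess (σ : ℝ) :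
    ∫ x, f x ∂μ - μ.real Set.univ * σ ≤ integralExcess μ f σ := by
  calc ∫ x, f x ∂μ - μ.real Set.univ * σ = ∫ x, (f x - σ) ∂μ := by
        rw [integral_sub hf (integrable_const σ), integral_const, smul_eq_mul]
    _ ≤ integralExcess μ f σ :=
        integral_mono (hf.sub (integrable_const σ)) (hf.max_sub_const σ) fun _ => le_max_left _ _

lemma tendsto_integralExcess_atBot (hμ : μ ≠ 0) :
    Tendsto (integralExcess μ f) atBot atTop := by
  have hpos : 0 < μ.real Set.univ := by
    simpa [measureReal_def, ENNReal.toReal_pos_iff, measure_lt_top] using hμ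
  refine tendsto_atTop_mono (integral_sub_le_integralExcess hf) ?_
  simpa [sub_eq_add_neg] using tendsto_atTop_add_const_left _ (∫ x, f x ∂μ)
    (tendsto_neg_atBot_atTop.comp (tendsto_id.const_mul_atBot hpos))

lemma tendsto_integralExcess_atTop : Tendsto (integralExcess μ f) atTop (𝓝 0) := by
  have hlim : ∀ x, Tendsto (fun σ => max (f x - σ) 0) atTop (𝓝 0) := fun x =>
    tendsto_const_nhds.congr' <| (eventually_ge_atTop (f x)).mono fun σ hσ =>
      (max_eq_right (by linarith)).symm
  have := tendsto_integral_filter_of_dominated_convergence (fun x => max (f x) 0)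
    (Eventually.of_forall fun σ => (hf.max_sub_const σ).aestronglyMeasurable)
    ((eventually_ge_atTop 0).mono fun σ hσ => ae_of_all _ fun x => by
      rw [Real.norm_of_nonneg (le_max_right _ _)]
      exact max_le_max (by linarith) le_rfl)
    hf.pos_part (ae_of_all _ hlim)
  rwa [integral_zero] at this

lemma integralExcess_eq_zero_of_eq {s t : ℝ} (hst : s < t)
    (h : integralExcess μ f s = integralExcess μ f t) : integralExcess μ f t = 0 := by
  have hdiff : ∫ x, (max (f x - s) 0 - max (f x - t) 0) ∂μ = 0 := by
    rw [integral_sub (hf.max_sub_const s) (hf.max_sub_const t)]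
    exact sub_eq_zero.2 h
  have hnonneg : 0 ≤ fun x => max (f x - s) 0 - max (f x - t) 0 := fun x =>
    sub_nonneg.2 (max_le_max (by linarith) le_rfl)
  have hae := (integral_eq_zero_iff_of_nonneg hnonneg
    ((hf.max_sub_const s).sub (hf.max_sub_const t))).1 hdiff
  have hzero : (fun x => max (f x - t) 0) =ᵐ[μ] 0 := hae.mono fun x hx =>
    max_sub_eq_zero_of_max_sub_eq hst (sub_eq_zero.1 hx)
  simp [integralExcess, integral_congr_ae hzero]

lemma strictAntiOn_integralExcess :
    StrictAntiOn (integralExcess μ f) {σ | 0 < integralExcess μ f σ} := fun _ _ _ ht hst =>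
  (antitone_integralExcess hf hst.le).lt_of_ne fun h =>
    ht.ne' (integralExcess_eq_zero_of_eq hf hst h.symm)

theorem existsUnique_integralExcess_eq (hμ : μ ≠ 0) {y : ℝ} (hy : 0 < y) :
    ∃! σ, integralExcess μ f σ = y := by
  obtain ⟨s, hs⟩ := ((tendsto_integralExcess_atTop hf).eventually (gt_mem_nhds hy)).exists
  obtain ⟨t, ht⟩ := ((tendsto_integralExcess_atBot hf hμ).eventually (eventually_ge_atTop y)).exists
  obtain ⟨σ, hσ⟩ := intermediate_value_univ s t (lipschitzWith_integralExcess hf).continuous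
    ⟨hs.le, ht⟩
  refine ⟨σ, hσ, fun τ hτ => (strictAntiOn_integralExcess hf).injOn ?_ ?_ (hτ.trans hσ.symm)⟩
  · exact (hτ.symm ▸ hy : 0 < integralExcess μ f τ)
  · exact (hσ.symm ▸ hy : 0 < integralExcess μ f σ)

end Integrable

end MeasureTheory

end

/-- For `θ ∈ L²([a,b])`, the equation `g_θ(σ) = 1`, with
`g_θ(σ) = ∫ₐᵇ max(θ(x) − σ, 0) dx`, has exactly one solution `σ ∈ ℝ`. -/
theorem gtheta_eq_one_existsUnique (a b : ℝ) (hab : a < b) (θ : ℝ → ℝ)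
    (hθ : MemLp θ 2 (volume.restrict (Set.Icc a b))) :
    ∃! σ : ℝ, (∫ x in Set.Icc a b, max (θ x - σ) 0) = 1 := by
  have hμ : volume.restrict (Set.Icc a b) ≠ 0 := by
    simpa [Measure.restrict_eq_zero, Real.volume_Icc] using hab
  exact existsUnique_integralExcess_eq (hθ.integrable (by norm_num)) hμ one_pos
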